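/- Let φ be 𝒯-good and I ∈ S_φ. Then A(φ,I) = I \ ⋃{J ∈ S_φ : J* = I} up to a null set, where J* is the smallest element of S_φ properly containing J; consequently μ(A(φ,I)) = μ(I) − Σ_{J ∈ S_φ, J* = I} μ(J). -/

import Mathlib

open MeasureTheory Set Filter
open scoped ENNReal

/-- A tree `𝒯` on a probability space `(X, μ)` in the sense of Melas:
`X ∈ 𝒯`; every `I ∈ 𝒯` is measurable with `μ(I) > 0`; each `I ∈ 𝒯` has a finite or
countable family `C(I) ⊆ 𝒯` of at least two pairwise disjoint elements with union `I`;
`𝒯` is the union of its generations `𝒯_(m)`; and `sup_{I ∈ 𝒯_(m)} μ(I) → 0`. -/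
structure DyadicTree {X : Type*} [MeasurableSpace X] (μ : Measure X) where
  mem : Set (Set X)
  univ_mem : Set.univ ∈ mem
  meas : ∀ I ∈ mem, MeasurableSet I
  measure_pos : ∀ I ∈ mem, 0 < μ I
  C : Set X → Set (Set X)
  C_subset_mem : ∀ I ∈ mem, C I ⊆ mem
  C_countable : ∀ I ∈ mem, (C I).Countable
  C_nontrivial : ∀ I ∈ mem, ∃ J ∈ C I, ∃ K ∈ C I, J ≠ K
  C_disjoint : ∀ I ∈ mem, (C I).Pairwise Disjoint
  C_union : ∀ I ∈ mem, ⋃₀ C I = I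
  gen : ℕ → Set (Set X)
  gen_zero : gen 0 = {Set.univ}
  gen_succ : ∀ m, gen (m + 1) = ⋃ I ∈ gen m, C I
  mem_eq : mem = ⋃ m, gen m
  sup_measure_tendsto : Tendsto (fun m => ⨆ I ∈ gen m, μ I) atTop (nhds 0)

variable {X : Type*} [MeasurableSpace X]

/-- The average `Av_I(φ) = (1/μ(I)) ∫_I φ dμ`. -/
noncomputable def Av (μ : Measure X) (I : Set X) (φ : X → ℝ≥0∞) : ℝ≥0∞ :=
  (∫⁻ y in I, φ y ∂μ) / μ I

/-- The dyadic-like maximal operator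
`M_𝒯 φ(x) = sup { (1/μ(I)) ∫_I φ dμ : x ∈ I ∈ 𝒯 }`. -/
noncomputable def maxOp {μ : Measure X} (T : DyadicTree μ) (φ : X → ℝ≥0∞) (x : X) : ℝ≥0∞ :=
  ⨆ I ∈ T.mem, ⨆ _ : x ∈ I, Av μ I φ

variable {μ : Measure X}

/-- The exceptional set `𝒜_φ = {x : M_𝒯φ(x) > Av_I(φ) for all I ∈ 𝒯 with x ∈ I}`. -/
def badSet (T : DyadicTree μ) (φ : X → ℝ≥0∞) : Set X :=
  {x | ∀ I ∈ T.mem, x ∈ I → Av μ I φ < maxOp T φ x}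

/-- `φ` is `𝒯`-good if the set `𝒜_φ` has `μ`-measure zero. -/
def TGood (T : DyadicTree μ) (φ : X → ℝ≥0∞) : Prop :=
  μ (badSet T φ) = 0

/-- The set `A(φ, I) = {x ∈ X ∖ 𝒜_φ : I_φ(x) = I}`, where `I_φ(x)` is the largest
`I ∈ 𝒯` with `x ∈ I` and `M_𝒯φ(x) = Av_I(φ)`. -/
def ASet (T : DyadicTree μ) (φ : X → ℝ≥0∞) (I : Set X) : Set X :=
  {x | x ∉ badSet T φ ∧ x ∈ I ∧ maxOp T φ x = Av μ I φ ∧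
    ∀ J ∈ T.mem, x ∈ J → maxOp T φ x = Av μ J φ → J ⊆ I}

/-- The subtree `S_φ = {I ∈ 𝒯 : μ(A(φ,I)) > 0} ∪ {X}`. -/
def Sphi (T : DyadicTree μ) (φ : X → ℝ≥0∞) : Set (Set X) :=
  {I ∈ T.mem | 0 < μ (ASet T φ I)} ∪ {Set.univ}

/-- For `J ∈ S_φ`, `J* = I` means `I` is the smallest element of `S_φ` properly
containing `J`. -/
def isStar (T : DyadicTree μ) (φ : X → ℝ≥0∞) (J I : Set X) : Prop :=
  I ∈ Sphi T φ ∧ J ⊂ I ∧ ∀ K ∈ Sphi T φ, J ⊂ K → I ⊆ K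

/-! Off the bad set `M_𝒯 φ(x)` is attained, and the attaining set of least generation is the
largest, so `x ∈ A(φ,K)` for some `K`; discarding the countably many null sets `A(φ,K)` leaves
`K ∈ S_φ` for almost every `x`. A point of `A(φ,K)` lies in no `J ∈ S_φ` with `J ⊊ K`, since a
point of `A(φ,J)` would then also realize its maximal average on `K ⊋ J`. Hence `A(φ,I)` misses
every child `J` of `I` (those with `J* = I`), and for almost every `x ∈ I` outside the children
the set `K` is neither `⊊ I` (then `x` lies in the child above `K`) nor `⊋ I`, so `K = I`.
The children are pairwise disjoint, which gives the measure identity. -/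

namespace DyadicTree

variable (T : DyadicTree μ)

theorem gen_subset_mem (m : ℕ) : T.gen m ⊆ T.mem :=
  T.mem_eq ▸ subset_iUnion T.gen m

theorem exists_mem_gen {I : Set X} (hI : I ∈ T.mem) : ∃ m, I ∈ T.gen m :=
  mem_iUnion.1 (T.mem_eq ▸ hI)

theorem subset_of_mem_C {I J : Set X} (hI : I ∈ T.mem) (hJ : J ∈ T.C I) : J ⊆ I :=
  T.C_union I hI ▸ subset_sUnion_of_mem hJ

theorem countable_gen (m : ℕ) : (T.gen m).Countable := by
  induction m with
  | zero => simp [T.gen_zero]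
  | succ m ih =>
    rw [T.gen_succ]
    exact ih.biUnion fun I hI => T.C_countable I (T.gen_subset_mem m hI)

theorem countable_mem : T.mem.Countable :=
  T.mem_eq ▸ countable_iUnion T.countable_gen

theorem eq_or_disjoint_of_mem_gen {m : ℕ} {I J : Set X} (hI : I ∈ T.gen m)
    (hJ : J ∈ T.gen m) : I = J ∨ Disjoint I J := by
  induction m generalizing I J with
  | zero =>
    rw [T.gen_zero, mem_singleton_iff] at hI hJ
    exact Or.inl (hI.trans hJ.symm)
  | succ m ih =>
    rw [T.gen_succ] at hI hJ
    obtain ⟨P, hP, hIP⟩ := mem_iUnion₂.1 hI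
    obtain ⟨Q, hQ, hJQ⟩ := mem_iUnion₂.1 hJ
    rcases ih hP hQ with rfl | hPQ
    · exact (eq_or_ne I J).imp_right (T.C_disjoint P (T.gen_subset_mem m hP) hIP hJQ)
    · exact Or.inr <| hPQ.mono (T.subset_of_mem_C (T.gen_subset_mem m hP) hIP)
        (T.subset_of_mem_C (T.gen_subset_mem m hQ) hJQ)

theorem exists_superset_mem_gen {m n : ℕ} (hmn : m ≤ n) {J : Set X} (hJ : J ∈ T.gen n) :
    ∃ I ∈ T.gen m, J ⊆ I := by
  induction n, hmn using Nat.le_induction generalizing J with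
  | base => exact ⟨J, hJ, subset_rfl⟩
  | succ n _ ih =>
    rw [T.gen_succ] at hJ
    obtain ⟨P, hP, hJP⟩ := mem_iUnion₂.1 hJ
    obtain ⟨I, hI, hPI⟩ := ih hP
    exact ⟨I, hI, (T.subset_of_mem_C (T.gen_subset_mem n hP) hJP).trans hPI⟩

theorem subset_of_mem_gen_of_le {m n : ℕ} (hmn : m ≤ n) {I J : Set X} (hI : I ∈ T.gen m)
    (hJ : J ∈ T.gen n) {x : X} (hxI : x ∈ I) (hxJ : x ∈ J) : J ⊆ I := by
  obtain ⟨I', hI', hJI'⟩ := T.exists_superset_mem_gen hmn hJ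
  rcases T.eq_or_disjoint_of_mem_gen hI hI' with rfl | hII'
  · exact hJI'
  · exact (disjoint_left.1 hII' hxI (hJI' hxJ)).elim

theorem subset_or_subset_of_mem {I J : Set X} (hI : I ∈ T.mem) (hJ : J ∈ T.mem) {x : X}
    (hxI : x ∈ I) (hxJ : x ∈ J) : I ⊆ J ∨ J ⊆ I := by
  obtain ⟨m, hm⟩ := T.exists_mem_gen hI
  obtain ⟨n, hn⟩ := T.exists_mem_gen hJ
  rcases le_total m n with hmn | hnm
  · exact Or.inr (T.subset_of_mem_gen_of_le hmn hm hn hxI hxJ)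
  · exact Or.inl (T.subset_of_mem_gen_of_le hnm hn hm hxJ hxI)

theorem exists_maximal_of_mem (P : Set X → Prop) {x : X} (h : ∃ K ∈ T.mem, x ∈ K ∧ P K) :
    ∃ K ∈ T.mem, x ∈ K ∧ P K ∧ ∀ J ∈ T.mem, x ∈ J → P J → J ⊆ K := by
  classical
  have hgen : ∃ m, ∃ K ∈ T.gen m, x ∈ K ∧ P K := by
    obtain ⟨K, hK, hxK, hPK⟩ := h
    obtain ⟨m, hm⟩ := T.exists_mem_gen hK
    exact ⟨m, K, hm, hxK, hPK⟩
  obtain ⟨K, hK, hxK, hPK⟩ := Nat.find_spec hgen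
  refine ⟨K, T.gen_subset_mem _ hK, hxK, hPK, fun J hJ hxJ hPJ => ?_⟩
  obtain ⟨n, hn⟩ := T.exists_mem_gen hJ
  exact T.subset_of_mem_gen_of_le (Nat.find_min' hgen ⟨J, hn, hxJ, hPJ⟩) hK hn hxK hxJ

end DyadicTree

section ASet

variable {T : DyadicTree μ} {φ : X → ℝ≥0∞}

theorem Av_le_maxOp {I : Set X} {x : X} (hI : I ∈ T.mem) (hx : x ∈ I) :
    Av μ I φ ≤ maxOp T φ x :=
  le_iSup₂_of_le I hI (le_iSup_of_le hx le_rfl)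

theorem exists_mem_ASet_of_notMem_badSet {x : X} (hx : x ∉ badSet T φ) :
    ∃ K ∈ T.mem, x ∈ ASet T φ K := by
  obtain ⟨K₀, hK₀, hxK₀, hle⟩ : ∃ K ∈ T.mem, x ∈ K ∧ maxOp T φ x ≤ Av μ K φ := by
    simpa [badSet] using hx
  obtain ⟨K, hK, hxK, hmax, hKmax⟩ := T.exists_maximal_of_mem
    (fun K => maxOp T φ x = Av μ K φ) ⟨K₀, hK₀, hxK₀, hle.antisymm (Av_le_maxOp hK₀ hxK₀)⟩
  exact ⟨K, hK, hx, hxK, hmax, hKmax⟩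

theorem Sphi_subset_mem : Sphi T φ ⊆ T.mem := by
  rintro I (⟨hI, -⟩ | rfl)
  exacts [hI, T.univ_mem]

theorem countable_Sphi : (Sphi T φ).Countable :=
  T.countable_mem.mono Sphi_subset_mem

theorem nonempty_ASet_of_mem_Sphi_of_ssubset {I J : Set X} (hJ : J ∈ Sphi T φ) (hJI : J ⊂ I) :
    (ASet T φ J).Nonempty := by
  rcases hJ with ⟨-, hpos⟩ | rfl
  · exact nonempty_of_measure_ne_zero hpos.ne'
  · exact (hJI.2 (subset_univ I)).elim

theorem disjoint_ASet_of_ssubset {I J : Set X} (hI : I ∈ T.mem) (hJ : J ∈ Sphi T φ)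
    (hJI : J ⊂ I) : Disjoint (ASet T φ I) J := by
  obtain ⟨y, -, hyJ, hyAv, hymax⟩ := nonempty_ASet_of_mem_Sphi_of_ssubset hJ hJI
  refine disjoint_left.2 fun x ⟨_, _, hxAv, _⟩ hxJ => hJI.2 (hymax I hI (hJI.1 hyJ) ?_)
  have hJ_le_I : Av μ J φ ≤ Av μ I φ := hxAv ▸ Av_le_maxOp (Sphi_subset_mem hJ) hxJ
  have hI_le_J : Av μ I φ ≤ Av μ J φ := hyAv ▸ Av_le_maxOp hI (hJI.1 hyJ)
  rw [hyAv, hI_le_J.antisymm hJ_le_I]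

theorem exists_isStar_superset {I K : Set X} (hI : I ∈ Sphi T φ) (hK : K ∈ Sphi T φ)
    (hKI : K ⊂ I) : ∃ J ∈ Sphi T φ, isStar T φ J I ∧ K ⊆ J := by
  obtain ⟨x, hxK⟩ := nonempty_of_measure_ne_zero (T.measure_pos K (Sphi_subset_mem hK)).ne'
  obtain ⟨J, -, hxJ, ⟨hJ, hKJ, hJI⟩, hJmax⟩ := T.exists_maximal_of_mem
    (fun L => L ∈ Sphi T φ ∧ K ⊆ L ∧ L ⊂ I) ⟨K, Sphi_subset_mem hK, hxK, hK, subset_rfl, hKI⟩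
  refine ⟨J, hJ, ⟨hI, hJI, fun L hL hJL => ?_⟩, hKJ⟩
  rcases T.subset_or_subset_of_mem (Sphi_subset_mem hL) (Sphi_subset_mem hI) (hJL.1 hxJ)
    (hJI.1 hxJ) with hLI | hIL
  · rcases hLI.eq_or_ssubset with rfl | hLI
    · exact subset_rfl
    · exact (hJL.2 (hJmax L (Sphi_subset_mem hL) (hJL.1 hxJ) ⟨hL, hKJ.trans hJL.1, hLI⟩)).elim
  · exact hIL

theorem pairwiseDisjoint_isStar (I : Set X) :
    {J ∈ Sphi T φ | isStar T φ J I}.PairwiseDisjoint id := by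
  rintro J₁ ⟨hJ₁, -, hJ₁I, hJ₁min⟩ J₂ ⟨hJ₂, -, hJ₂I, hJ₂min⟩ hne
  refine Set.disjoint_iff.2 fun x ⟨hx₁, hx₂⟩ => ?_
  rcases T.subset_or_subset_of_mem (Sphi_subset_mem hJ₁) (Sphi_subset_mem hJ₂) hx₁ hx₂
    with h₁₂ | h₂₁
  · exact hJ₂I.2 (hJ₁min J₂ hJ₂ (h₁₂.ssubset_of_ne hne))
  · exact hJ₁I.2 (hJ₂min J₁ hJ₁ (h₂₁.ssubset_of_ne hne.symm))

theorem measure_biUnion_isStar (I : Set X) :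
    μ (⋃ J ∈ {J ∈ Sphi T φ | isStar T φ J I}, J) =
      ∑' J : {J ∈ Sphi T φ | isStar T φ J I}, μ (J : Set X) :=
  measure_biUnion (countable_Sphi.mono (sep_subset _ _)) (pairwiseDisjoint_isStar I)
    fun J hJ => T.meas J (Sphi_subset_mem hJ.1)

theorem ae_exists_mem_Sphi_mem_ASet (hgood : TGood T φ) :
    ∀ᵐ x ∂μ, ∃ K ∈ Sphi T φ, x ∈ ASet T φ K := by
  have hnull : μ (badSet T φ ∪ ⋃ K ∈ {K ∈ T.mem | μ (ASet T φ K) = 0}, ASet T φ K) = 0 :=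
    measure_union_null hgood <|
      (measure_biUnion_null_iff (T.countable_mem.mono (sep_subset _ _))).2 fun K hK => hK.2
  refine ae_iff.2 (measure_mono_null (fun x hx => ?_) hnull)
  by_cases hxbad : x ∈ badSet T φ
  · exact Or.inl hxbad
  obtain ⟨K, hK, hxK⟩ := exists_mem_ASet_of_notMem_badSet hxbad
  refine Or.inr (mem_biUnion ⟨hK, ?_⟩ hxK)
  by_contra hpos
  exact hx ⟨K, Or.inl ⟨hK, pos_iff_ne_zero.2 hpos⟩, hxK⟩

theorem ASet_subset_diff_biUnion_isStar (I : Set X) :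
    ASet T φ I ⊆ I \ ⋃ J ∈ {J ∈ Sphi T φ | isStar T φ J I}, J := by
  intro x hx
  refine ⟨hx.2.1, fun hxU => ?_⟩
  obtain ⟨J, ⟨hJ, hJI⟩, hxJ⟩ := mem_iUnion₂.1 hxU
  exact disjoint_left.1 (disjoint_ASet_of_ssubset (Sphi_subset_mem hJI.1) hJ hJI.2.1) hx hxJ

theorem mem_ASet_of_mem_diff_biUnion_isStar {I K : Set X} {x : X} (hI : I ∈ Sphi T φ)
    (hK : K ∈ Sphi T φ) (hxK : x ∈ ASet T φ K)
    (hx : x ∈ I \ ⋃ J ∈ {J ∈ Sphi T φ | isStar T φ J I}, J) : x ∈ ASet T φ I := by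
  obtain ⟨hxI, hxU⟩ := hx
  rcases T.subset_or_subset_of_mem (Sphi_subset_mem hK) (Sphi_subset_mem hI) hxK.2.1 hxI
    with hKI | hIK
  · rcases hKI.eq_or_ssubset with rfl | hKI
    · exact hxK
    obtain ⟨J, hJ, hJI, hKJ⟩ := exists_isStar_superset hI hK hKI
    exact (hxU (mem_biUnion ⟨hJ, hJI⟩ (hKJ hxK.2.1))).elim
  · rcases hIK.eq_or_ssubset with rfl | hIK
    · exact hxK
    exact (disjoint_left.1 (disjoint_ASet_of_ssubset (Sphi_subset_mem hK) hI hIK) hxK hxI).elim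

theorem ASet_ae_eq_diff_biUnion_isStar (hgood : TGood T φ) {I : Set X} (hI : I ∈ Sphi T φ) :
    ASet T φ I =ᵐ[μ] (I \ ⋃ J ∈ {J ∈ Sphi T φ | isStar T φ J I}, J) := by
  refine (ASet_subset_diff_biUnion_isStar I).eventuallyLE.antisymm ?_
  filter_upwards [ae_exists_mem_Sphi_mem_ASet hgood] with x ⟨K, hK, hxK⟩ hx
  exact mem_ASet_of_mem_diff_biUnion_isStar hI hK hxK hx

end ASet

theorem ASet_eq_diff_general (μ : Measure X) [IsProbabilityMeasure μ]
    (T : DyadicTree μ) (φ : X → ℝ≥0∞) (hgood : TGood T φ)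
    (I : Set X) (hI : I ∈ Sphi T φ) :
    μ (ASet T φ I \ (I \ ⋃ J ∈ {J ∈ Sphi T φ | isStar T φ J I}, J)) = 0 ∧
    μ ((I \ ⋃ J ∈ {J ∈ Sphi T φ | isStar T φ J I}, J) \ ASet T φ I) = 0 ∧
    μ (ASet T φ I) = μ I - ∑' J : {J ∈ Sphi T φ | isStar T φ J I}, μ (J : Set X) := by
  have hae := ASet_ae_eq_diff_biUnion_isStar hgood hI
  have hUI : (⋃ J ∈ {J ∈ Sphi T φ | isStar T φ J I}, J) ⊆ I :=
    iUnion₂_subset fun J hJ => hJ.2.2.1.1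
  have hU : MeasurableSet (⋃ J ∈ {J ∈ Sphi T φ | isStar T φ J I}, J) :=
    .biUnion (countable_Sphi.mono (sep_subset _ _)) fun J hJ => T.meas J (Sphi_subset_mem hJ.1)
  have hmeasure : μ (ASet T φ I) = μ (I \ ⋃ J ∈ {J ∈ Sphi T φ | isStar T φ J I}, J) :=
    measure_congr hae
  refine ⟨(ae_eq_set.1 hae).1, (ae_eq_set.1 hae).2, ?_⟩
  rw [hmeasure, measure_sdiff hUI hU.nullMeasurableSet (measure_ne_top μ _),
    measure_biUnion_isStar]

/-- Lemma 3.2 iv): for `φ` `𝒯`-good and `I ∈ S_φ`,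
`A(φ,I) = I ∖ ⋃ {J ∈ S_φ : J* = I}` up to a null set, so
`μ(A(φ,I)) = μ(I) − Σ_{J ∈ S_φ, J* = I} μ(J)`. -/
theorem ASet_eq_diff (μ : Measure X) [IsProbabilityMeasure μ] [NullSingletonClass μ]
    (T : DyadicTree μ) (φ : X → ℝ≥0∞) (hφ : Measurable φ)
    (hint : ∫⁻ y, φ y ∂μ ≠ ∞) (hgood : TGood T φ)
    (I : Set X) (hI : I ∈ Sphi T φ) :
    μ (ASet T φ I \ (I \ ⋃ J ∈ {J ∈ Sphi T φ | isStar T φ J I}, J)) = 0 ∧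
    μ ((I \ ⋃ J ∈ {J ∈ Sphi T φ | isStar T φ J I}, J) \ ASet T φ I) = 0 ∧
    μ (ASet T φ I) = μ I - ∑' J : {J ∈ Sphi T φ | isStar T φ J I}, μ (J : Set X) :=
  ASet_eq_diff_general μ T φ hgood I hI
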